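/- The BB84 family of bipartite correlations P(ab|xy) = (1 + (-1)^{a⊕b⊕xy} δ_{x,y} W)/4 with 0 < W ≤ 1 admits, when W ≤ 1/2, a local-hidden-state decomposition P(ab|xy) = Σ_λ q_λ P(a|x,ρ_A^λ)P(b|y,ρ_B^λ) where A₀=σₓ, A₁=σ_y on Alice's side, B₀,B₁ are the fixed measurements (σₓ∓σ_y)/√2 on Bob's side, and ρ_A^λ, ρ_B^λ are single-qubit states. Equivalently, for W ≤ 1/2 the BB84 family can be reproduced by a separable two-qubit state under these measurements. -/

import Mathlib

/-!
Let the hidden variable `λ ∈ {±1}²` be uniformly distributed. Alice holds the pure equatorial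
state with Bloch vector `λ / √2`, so `⟨A_x⟩ = λ_x / √2`, and Bob an equatorial state with
`⟨B_y⟩ = √2 W (-1)^y λ_y`; its Bloch vector has length `2|W|`, so it is a state exactly when
`|W| ≤ 1/2`. Both marginals average to zero and, since `E[λ_x λ_y] = δ_{xy}`, the correlator is
`E[⟨A_x⟩⟨B_y⟩] = (-1)^y δ_{xy} W`, which is the BB84 correlator.
-/

open Matrix ComplexOrder

noncomputable def σx : Matrix (Fin 2) (Fin 2) ℂ := !![0, 1; 1, 0]
noncomputable def σy : Matrix (Fin 2) (Fin 2) ℂ := !![0, -Complex.I; Complex.I, 0]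

/-- Alice's observables: A₀ = σₓ, A₁ = σ_y. -/
noncomputable def Aobs : Fin 2 → Matrix (Fin 2) (Fin 2) ℂ := fun x => if x = 0 then σx else σy

/-- Bob's observables: B₀ = (σₓ − σ_y)/√2, B₁ = (σₓ + σ_y)/√2. -/
noncomputable def Bobs : Fin 2 → Matrix (Fin 2) (Fin 2) ℂ := fun y =>
  if y = 0 then (Real.sqrt 2 : ℂ)⁻¹ • (σx - σy) else (Real.sqrt 2 : ℂ)⁻¹ • (σx + σy)

/-- The projector onto the `(-1)^a` eigenspace of a ±1-valued observable `O`. -/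
noncomputable def proj (O : Matrix (Fin 2) (Fin 2) ℂ) (a : Fin 2) : Matrix (Fin 2) (Fin 2) ℂ :=
  (2 : ℂ)⁻¹ • (1 + ((-1 : ℂ) ^ (a : ℕ)) • O)

/-- The probability of outcome `a` when measuring observable `O` on qubit state `ρ`. -/
noncomputable def probOf (O : Matrix (Fin 2) (Fin 2) ℂ) (a : Fin 2)
    (ρ : Matrix (Fin 2) (Fin 2) ℂ) : ℝ := ((proj O a * ρ).trace).re

/-- The BB84 family of bipartite correlations. -/
noncomputable def bbP (W : ℝ) (a b x y : Fin 2) : ℝ :=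
  (1 + (-1 : ℝ) ^ ((a + b + x * y : Fin 2) : ℕ) * (if x = y then W else 0)) / 4

theorem neg_one_pow_val_add {R : Type*} [Ring R] (a b : Fin 2) :
    (-1 : R) ^ ((a + b : Fin 2) : ℕ) = (-1) ^ (a : ℕ) * (-1) ^ (b : ℕ) := by
  rw [Fin.val_add, ← neg_one_pow_eq_pow_mod_two, pow_add]

noncomputable def bloch (u v : ℝ) : Matrix (Fin 2) (Fin 2) ℂ :=
  (2 : ℂ)⁻¹ • (1 + (u : ℂ) • σx + (v : ℂ) • σy)

theorem bloch_eq (u v : ℝ) :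
    bloch u v = !![1 / 2, (u - v * Complex.I) / 2; (u + v * Complex.I) / 2, 1 / 2] := by
  ext i j
  fin_cases i <;> fin_cases j <;> simp [bloch, σx, σy] <;> ring

theorem bloch_trace (u v : ℝ) : (bloch u v).trace = 1 := by
  rw [bloch_eq, trace_fin_two_of]; norm_num

theorem bloch_eq_smul_vecMulVec_add_diagonal (u v : ℝ) :
    bloch u v = (2 : ℝ)⁻¹ •
      (vecMulVec ![1, u + v * Complex.I] (star ![1, u + v * Complex.I]) +
        diagonal ![0, ((1 - (u ^ 2 + v ^ 2) : ℝ) : ℂ)]) := by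
  rw [bloch_eq]
  ext i j
  fin_cases i <;> fin_cases j <;> simp [vecMulVec, Complex.ext_iff, pow_two] <;>
    constructor <;> ring

theorem bloch_posSemidef {u v : ℝ} (h : u ^ 2 + v ^ 2 ≤ 1) : (bloch u v).PosSemidef := by
  rw [bloch_eq_smul_vecMulVec_add_diagonal]
  refine .smul (.add (posSemidef_vecMulVec_self_star _) (.diagonal fun i => ?_)) (by norm_num)
  fin_cases i
  · exact le_rfl
  · exact Complex.zero_le_real.2 (sub_nonneg.2 h)

noncomputable def expectation (O ρ : Matrix (Fin 2) (Fin 2) ℂ) : ℝ := (O * ρ).trace.re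

theorem probOf_eq_of_trace_eq_one {ρ : Matrix (Fin 2) (Fin 2) ℂ} (hρ : ρ.trace = 1)
    (O : Matrix (Fin 2) (Fin 2) ℂ) (a : Fin 2) :
    probOf O a ρ = (1 + (-1) ^ (a : ℕ) * expectation O ρ) / 2 := by
  rcases Nat.even_or_odd (a : ℕ) with ha | ha <;>
    simp [probOf, proj, expectation, add_mul, trace_add, trace_smul, hρ, ha.neg_one_pow] <;>
    ring

theorem expectation_σx_bloch (u v : ℝ) : expectation σx (bloch u v) = u := by
  simp [expectation, σx, bloch_eq, trace_fin_two_of]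

theorem expectation_σy_bloch (u v : ℝ) : expectation σy (bloch u v) = v := by
  simp [expectation, σy, bloch_eq, trace_fin_two_of]; ring

theorem expectation_Aobs_bloch (x : Fin 2) (u v : ℝ) :
    expectation (Aobs x) (bloch u v) = if x = 0 then u else v := by
  fin_cases x <;> simp [Aobs, expectation_σx_bloch, expectation_σy_bloch]

theorem expectation_Bobs_bloch (y : Fin 2) (u v : ℝ) :
    expectation (Bobs y) (bloch u v) = (√2)⁻¹ * (if y = 0 then u - v else u + v) := by
  fin_cases y <;> simp [Bobs, expectation, σx, σy, bloch_eq, trace_fin_two_of] <;>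
    rw [inv_eq_one_div, ← Real.sqrt_div_self'] <;> ring

theorem sum_weighted_response_product {ι : Type*} [Fintype ι] {q α β : ι → ℝ}
    (hq : ∑ l, q l = 1) (hα : ∑ l, q l * α l = 0) (hβ : ∑ l, q l * β l = 0) (s t : ℝ) :
    ∑ l, q l * ((1 + s * α l) / 2) * ((1 + t * β l) / 2) =
      (1 + s * t * ∑ l, q l * α l * β l) / 4 := by
  have expand : ∀ l, q l * ((1 + s * α l) / 2) * ((1 + t * β l) / 2) =
      (q l + s * (q l * α l) + t * (q l * β l) + s * t * (q l * α l * β l)) / 4 :=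
    fun l => by ring
  simp only [expand, ← Finset.sum_div, Finset.sum_add_distrib, ← Finset.mul_sum, hq, hα, hβ]
  ring

theorem bbP_eq (W : ℝ) (a b x y : Fin 2) :
    bbP W a b x y =
      (1 + (-1) ^ (a : ℕ) * (-1) ^ (b : ℕ) * ((-1) ^ (y : ℕ) * if x = y then W else 0)) /
        4 := by
  have diagonal_sign : ((-1 : ℝ) ^ ((x * y : Fin 2) : ℕ) * if x = y then W else 0) =
      (-1) ^ (y : ℕ) * if x = y then W else 0 := by
    split_ifs with hxy
    · subst hxy; fin_cases x <;> rfl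
    · simp
  rw [bbP, neg_one_pow_val_add, neg_one_pow_val_add, mul_assoc, diagonal_sign]

-- The four values of the hidden variable `λ ∈ {±1}²`.
def hiddenSign : Fin 4 → Fin 2 → ℝ := ![![1, 1], ![1, -1], ![-1, 1], ![-1, -1]]

theorem hiddenSign_sq (l : Fin 4) (i : Fin 2) : hiddenSign l i ^ 2 = 1 := by
  fin_cases l <;> fin_cases i <;> norm_num [hiddenSign]

theorem sum_hiddenSign (i : Fin 2) : ∑ l, hiddenSign l i = 0 := by
  fin_cases i <;> simp [hiddenSign, Fin.sum_univ_four]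

theorem sum_hiddenSign_mul_hiddenSign (i j : Fin 2) :
    ∑ l, hiddenSign l i * hiddenSign l j = if i = j then 4 else 0 := by
  fin_cases i <;> fin_cases j <;> simp [hiddenSign, Fin.sum_univ_four] <;> norm_num

noncomputable def aliceState (l : Fin 4) : Matrix (Fin 2) (Fin 2) ℂ :=
  bloch (hiddenSign l 0 / √2) (hiddenSign l 1 / √2)

noncomputable def bobState (W : ℝ) (l : Fin 4) : Matrix (Fin 2) (Fin 2) ℂ :=
  bloch (W * (hiddenSign l 0 - hiddenSign l 1)) (-(W * (hiddenSign l 0 + hiddenSign l 1)))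

theorem aliceState_trace (l : Fin 4) : (aliceState l).trace = 1 := bloch_trace _ _

theorem bobState_trace (W : ℝ) (l : Fin 4) : (bobState W l).trace = 1 := bloch_trace _ _

theorem aliceState_posSemidef (l : Fin 4) : (aliceState l).PosSemidef := by
  refine bloch_posSemidef (le_of_eq ?_)
  rw [div_pow, div_pow, Real.sq_sqrt zero_le_two, hiddenSign_sq, hiddenSign_sq]
  norm_num

theorem bobState_posSemidef {W : ℝ} (hW : |W| ≤ 1 / 2) (l : Fin 4) :
    (bobState W l).PosSemidef := by
  refine bloch_posSemidef ?_
  have hW2 : W ^ 2 ≤ 1 / 4 := by nlinarith [sq_abs W, abs_nonneg W]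
  have h0 := hiddenSign_sq l 0
  have h1 := hiddenSign_sq l 1
  nlinarith

theorem expectation_Aobs_aliceState (x : Fin 2) (l : Fin 4) :
    expectation (Aobs x) (aliceState l) = hiddenSign l x / √2 := by
  rw [aliceState, expectation_Aobs_bloch]
  fin_cases x <;> rfl

theorem expectation_Bobs_bobState (W : ℝ) (y : Fin 2) (l : Fin 4) :
    expectation (Bobs y) (bobState W l) = √2 * W * ((-1) ^ (y : ℕ) * hiddenSign l y) := by
  have inv_sqrt_two_mul_two : (√2)⁻¹ * 2 = √2 := by
    rw [inv_mul_eq_div, div_eq_iff (by positivity), Real.mul_self_sqrt zero_le_two]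
  rw [bobState, expectation_Bobs_bloch]
  fin_cases y
  · simp only [Fin.zero_eta, Fin.isValue, ↓reduceIte, sub_neg_eq_add, pow_zero, one_mul]
    linear_combination (W * hiddenSign l 0) * inv_sqrt_two_mul_two
  · simp only [Fin.mk_one, Fin.isValue, one_ne_zero, ↓reduceIte, pow_one, neg_mul, one_mul,
      mul_neg]
    linear_combination (-(W * hiddenSign l 1)) * inv_sqrt_two_mul_two

theorem sum_expectation_Aobs_aliceState (x : Fin 2) :
    ∑ l, 4⁻¹ * expectation (Aobs x) (aliceState l) = 0 := by
  simp only [expectation_Aobs_aliceState, div_eq_mul_inv, ← Finset.mul_sum, ← Finset.sum_mul,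
    sum_hiddenSign]
  ring

theorem sum_expectation_Bobs_bobState (W : ℝ) (y : Fin 2) :
    ∑ l, 4⁻¹ * expectation (Bobs y) (bobState W l) = 0 := by
  simp only [expectation_Bobs_bobState, ← Finset.mul_sum, sum_hiddenSign, mul_zero]

theorem sum_expectation_aliceState_mul_bobState (W : ℝ) (x y : Fin 2) :
    ∑ l, 4⁻¹ * expectation (Aobs x) (aliceState l) * expectation (Bobs y) (bobState W l) =
      (-1) ^ (y : ℕ) * if x = y then W else 0 := by
  have hsqrt : √2 ≠ 0 := by positivity
  have term : ∀ l,
      4⁻¹ * expectation (Aobs x) (aliceState l) * expectation (Bobs y) (bobState W l) =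
        4⁻¹ * W * (-1) ^ (y : ℕ) * (hiddenSign l x * hiddenSign l y) := fun l => by
    rw [expectation_Aobs_aliceState, expectation_Bobs_bobState]
    field_simp
  simp only [term, ← Finset.mul_sum, sum_hiddenSign_mul_hiddenSign]
  split_ifs <;> ring

theorem stmt16 (W : ℝ) (h0 : 0 < W) (h1 : W ≤ 1 / 2) :
    ∃ (n : ℕ) (q : Fin n → ℝ) (ρA ρB : Fin n → Matrix (Fin 2) (Fin 2) ℂ),
      (∀ l, 0 ≤ q l) ∧ (∑ l, q l = 1) ∧
      (∀ l, (ρA l).PosSemidef ∧ (ρA l).trace = 1) ∧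
      (∀ l, (ρB l).PosSemidef ∧ (ρB l).trace = 1) ∧
      (∀ a b x y : Fin 2,
        bbP W a b x y = ∑ l, q l * probOf (Aobs x) a (ρA l) * probOf (Bobs y) b (ρB l)) := by
  have hW : |W| ≤ 1 / 2 := abs_le.2 ⟨by linarith, h1⟩
  refine ⟨4, fun _ => 4⁻¹, aliceState, bobState W, fun _ => by norm_num, by norm_num,
    fun l => ⟨aliceState_posSemidef l, aliceState_trace l⟩,
    fun l => ⟨bobState_posSemidef hW l, bobState_trace W l⟩, fun a b x y => ?_⟩
  simp only [probOf_eq_of_trace_eq_one (aliceState_trace _),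
    probOf_eq_of_trace_eq_one (bobState_trace W _)]
  rw [sum_weighted_response_product (by norm_num) (sum_expectation_Aobs_aliceState x)
    (sum_expectation_Bobs_bobState W y), sum_expectation_aliceState_mul_bobState, bbP_eq]
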